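/- Let θ > 0 and s ∈ ℝ, and define H(b) = ∫₀¹ (θ·Re ψ(θ + i u θ b/2) + s)/√(1 − u²) du for b ≥ 0. Then (H(b) − (π/2)(s + θψ(θ)))/b² tends to −(π/32)·θ³·ψ″(θ) as b → 0⁺; in other words H(b) = (π/2)(s + θψ(θ)) − (πθ³/32)·ψ″(θ)·b² + o(b²) as b → 0. -/

import Mathlib

/-!
Substituting `u = sin t` turns `H(b)` into `∫₀^{π/2} (θ φ(sin t · θb/2) + s) dt`, where
`φ(ε) = Re ψ(θ + iε)`. The derivatives of `ψ` at the real point `θ` are real, because `ψ` is real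
on the positive axis; so the Taylor expansion of `ψ` at `θ` gives
`φ(ε) = ψ(θ) - ψ''(θ) ε² / 2 + O(ε³)`. Integrating against `∫₀^{π/2} sin² t dt = π/4` yields
`H(b) = (π/2)(s + θψ(θ)) - (π/32) θ³ ψ''(θ) b² + o(b²)`.
-/

open MeasureTheory Filter Set

/-- The complex digamma function `ψ(z) = Γ'(z)/Γ(z)`. -/
noncomputable def psiC (z : ℂ) : ℂ := deriv Complex.Gamma z / Complex.Gamma z

/-- The real digamma function `ψ(x) = Γ'(x)/Γ(x)`. -/
noncomputable def psiR (x : ℝ) : ℝ := deriv Real.Gamma x / Real.Gamma x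

/-- `ψ''(x)`: the second derivative of the digamma function at the real point `x`. -/
noncomputable def psiR'' (x : ℝ) : ℝ := iteratedDeriv 2 psiR x

/-- `b` solves the defining equation for the endpoint at parameters `(s, θ)`:
`∫₀¹ (2θ·Re ψ(θ + i u θ b/2) + 2s)/(π√(1−u²)) du = 0`. -/
noncomputable def defEqn (s θ b : ℝ) : Prop :=
  (∫ u in (0:ℝ)..1,
      (2 * θ * (psiC ((θ : ℂ) + Complex.I * (u : ℂ) * (θ : ℂ) * (b : ℂ) / 2)).re + 2 * s)
        / (Real.pi * Real.sqrt (1 - u ^ 2))) = 0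

open Asymptotics Topology Real

theorem AnalyticAt.isBigO_sub_sum_iteratedDeriv {𝕜 : Type*} [NontriviallyNormedField 𝕜]
    [CompleteSpace 𝕜] [CharZero 𝕜] {f : 𝕜 → 𝕜} {x : 𝕜} (hf : AnalyticAt 𝕜 f x) (n : ℕ) :
    (fun y => f (x + y) - ∑ i ∈ Finset.range n, iteratedDeriv i f x / i.factorial * y ^ i)
      =O[𝓝 0] fun y => y ^ n := by
  refine isBigO_norm_right.mp ?_
  simpa [FormalMultilinearSeries.partialSum, mul_comm] using
    hf.hasFPowerSeriesAt.isBigO_sub_partialSum_pow n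

theorem deriv_eq_ofReal_deriv {f : ℂ → ℂ} {g : ℝ → ℝ} {x : ℝ} (hf : DifferentiableAt ℂ f x)
    (hfg : ∀ᶠ t : ℝ in 𝓝 x, f t = g t) : deriv f x = deriv g x := by
  have hf' : HasDerivAt (fun t : ℝ => f t) (deriv f x) x := hf.hasDerivAt.comp_ofReal
  have hg : HasDerivAt g (deriv f x).re x :=
    hf.hasDerivAt.real_of_complex.congr_of_eventuallyEq
      (hfg.mono fun t ht => by simp [ht])
  rw [hg.deriv]
  exact hf'.unique (hg.ofReal_comp.congr_of_eventuallyEq (hfg.mono fun t ht => ht))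

theorem iteratedDeriv_eq_ofReal_iteratedDeriv {f : ℂ → ℂ} {g : ℝ → ℝ} {s : Set ℝ} (hs : IsOpen s)
    (hf : ∀ x ∈ s, AnalyticAt ℂ f x) (hfg : ∀ x ∈ s, f x = g x) (n : ℕ) :
    ∀ x ∈ s, iteratedDeriv n f x = iteratedDeriv n g x := by
  induction n generalizing f g with
  | zero => simpa using hfg
  | succ n ih =>
    simp only [iteratedDeriv_succ']
    exact ih (fun x hx => (hf x hx).deriv) fun x hx =>
      deriv_eq_ofReal_deriv (hf x hx).differentiableAt
        (eventually_of_mem (hs.mem_nhds hx) hfg)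

theorem integral_div_sqrt_one_sub_sq {a b : ℝ} (ha : a ∈ Icc (-1) 1) (hb : b ∈ Icc (-1) 1)
    (F : ℝ → ℝ) :
    ∫ u in a..b, F u / √(1 - u ^ 2) = ∫ t in arcsin a..arcsin b, F (sin t) := by
  have hab : uIcc a b ⊆ Icc (-1) 1 := uIcc_subset_Icc ha hb
  rw [← intervalIntegral.integral_comp_mul_deriv_of_deriv_nonneg (f := arcsin)
    (f' := fun u => 1 / √(1 - u ^ 2)) continuous_arcsin.continuousOn]
  · refine intervalIntegral.integral_congr fun u hu => ?_
    simp [sin_arcsin (hab hu).1 (hab hu).2, div_eq_mul_inv]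
  · intro u hu
    have : -1 < u ∧ u < 1 := ⟨(le_min ha.1 hb.1).trans_lt hu.1, hu.2.trans_le (max_le ha.2 hb.2)⟩
    exact hasDerivAt_arcsin (by linarith) (by linarith)
  · intro u _
    positivity

theorem isLittleO_intervalIntegral_comp_mul {E : Type*} [NormedAddCommGroup E] [NormedSpace ℝ E]
    {R : ℝ → E} {g : ℝ → ℝ} {α β : ℝ} {n : ℕ} (hg : ContinuousOn g (uIcc α β))
    (hR : R =o[𝓝 0] fun ε => ε ^ n) :
    (fun x => ∫ t in α..β, R (g t * x)) =o[𝓝 0] fun x => x ^ n := by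
  obtain ⟨M, hM⟩ := isCompact_uIcc.exists_bound_of_continuousOn hg
  have hM0 : 0 ≤ M := (norm_nonneg _).trans (hM α left_mem_uIcc)
  set K := M ^ n * |β - α|
  rw [isLittleO_iff]
  intro c hc
  obtain ⟨η, hη, hRη⟩ := Metric.eventually_nhds_iff.mp (hR.def (c := c / (K + 1)) (by positivity))
  filter_upwards [Metric.ball_mem_nhds (0 : ℝ) (div_pos hη (by positivity : 0 < M + 1))]
    with x hx
  rw [mem_ball_zero_iff, lt_div_iff₀ (by positivity)] at hx
  have hgx : ∀ t ∈ uIcc α β, ‖g t * x‖ ≤ M * ‖x‖ := fun t ht => by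
    rw [norm_mul]; exact mul_le_mul_of_nonneg_right (hM t ht) (norm_nonneg x)
  calc ‖∫ t in α..β, R (g t * x)‖ ≤ c / (K + 1) * (M * ‖x‖) ^ n * |β - α| := by
        refine intervalIntegral.norm_integral_le_of_norm_le_const fun t ht => ?_
        have ht' := hgx t (uIoc_subset_uIcc ht)
        refine (hRη ?_).trans ?_
        · rw [dist_zero_right]; nlinarith [norm_nonneg x]
        · rw [norm_pow]; gcongr
    _ = c * (K / (K + 1)) * ‖x ^ n‖ := by rw [norm_pow]; ring
    _ ≤ c * ‖x ^ n‖ := by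
        gcongr
        exact mul_le_of_le_one_right hc.le ((div_le_one (by positivity)).mpr (by linarith))

theorem isLittleO_intervalIntegral_comp_mul_sub_quadratic {φ g : ℝ → ℝ} {a c α β : ℝ}
    (hφ : Continuous φ) (hg : ContinuousOn g (uIcc α β))
    (hφ₂ : (fun ε => φ ε - (a + c * ε ^ 2)) =o[𝓝 0] fun ε => ε ^ 2) :
    (fun x => (∫ t in α..β, φ (g t * x)) - ((β - α) * a + c * (∫ t in α..β, g t ^ 2) * x ^ 2))
      =o[𝓝 0] fun x => x ^ 2 := by
  refine (isLittleO_intervalIntegral_comp_mul hg hφ₂).congr_left fun x => ?_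
  have hφg : IntervalIntegrable (fun t => φ (g t * x)) volume α β :=
    (hφ.comp_continuousOn (hg.mul continuousOn_const)).intervalIntegrable
  have hg2 : IntervalIntegrable (fun t => c * (g t ^ 2 * x ^ 2)) volume α β :=
    (continuousOn_const.mul ((hg.pow 2).mul continuousOn_const)).intervalIntegrable
  have hquad : ∫ t in α..β, (a + c * (g t * x) ^ 2)
      = (β - α) * a + c * (∫ t in α..β, g t ^ 2) * x ^ 2 := by
    simp only [mul_pow]
    rw [intervalIntegral.integral_add intervalIntegrable_const hg2,
      intervalIntegral.integral_const, intervalIntegral.integral_const_mul,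
      intervalIntegral.integral_mul_const, smul_eq_mul]
    ring
  rw [← hquad, intervalIntegral.integral_sub hφg
    (intervalIntegrable_const.add (by simpa only [mul_pow] using hg2))]

theorem Complex.differentiableAt_Gamma_of_re_pos {z : ℂ} (hz : 0 < z.re) :
    DifferentiableAt ℂ Complex.Gamma z :=
  Complex.differentiableAt_Gamma z fun m hm => by
    have : (0 : ℝ) < -m := by simpa [hm] using hz
    linarith [m.cast_nonneg (α := ℝ)]

theorem analyticAt_psiC {z : ℂ} (hz : 0 < z.re) : AnalyticAt ℂ psiC z := by
  have hΓ : AnalyticOnNhd ℂ Complex.Gamma {w : ℂ | 0 < w.re} :=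
    DifferentiableOn.analyticOnNhd
      (fun _ hw => (Complex.differentiableAt_Gamma_of_re_pos hw).differentiableWithinAt)
      (isOpen_lt continuous_const Complex.continuous_re)
  exact (hΓ z hz).deriv.div (hΓ z hz) (Complex.Gamma_ne_zero_of_re_pos hz)

theorem psiC_ofReal {x : ℝ} (hx : 0 < x) : psiC x = psiR x := by
  rw [psiC, psiR, deriv_eq_ofReal_deriv (Complex.differentiableAt_Gamma_of_re_pos (by simpa))
    (.of_forall Complex.Gamma_ofReal), Complex.Gamma_ofReal, Complex.ofReal_div]

theorem iteratedDeriv_psiC_ofReal (n : ℕ) {x : ℝ} (hx : 0 < x) :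
    iteratedDeriv n psiC x = iteratedDeriv n psiR x :=
  iteratedDeriv_eq_ofReal_iteratedDeriv isOpen_Ioi
    (fun _ hy => analyticAt_psiC (by simpa using hy)) (fun _ hy => psiC_ofReal hy) n x hx

theorem continuous_re_psiC_add_mul_I {θ : ℝ} (hθ : 0 < θ) :
    Continuous fun ε : ℝ => (psiC (θ + ε * Complex.I)).re :=
  Complex.continuous_re.comp <| continuous_iff_continuousAt.2 fun _ =>
    (analyticAt_psiC (by simpa)).continuousAt.comp (by fun_prop)

theorem isLittleO_re_psiC_add_mul_I {θ : ℝ} (hθ : 0 < θ) :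
    (fun ε : ℝ => (psiC (θ + ε * Complex.I)).re - (psiR θ + -psiR'' θ / 2 * ε ^ 2))
      =o[𝓝 0] fun ε => ε ^ 2 := by
  have hI : Tendsto (fun ε : ℝ => (ε : ℂ) * Complex.I) (𝓝 0) (𝓝 0) :=
    (by fun_prop : Continuous fun ε : ℝ => (ε : ℂ) * Complex.I).tendsto' 0 0 (by simp)
  have hT := ((analyticAt_psiC (z := θ) (by simpa)).isBigO_sub_sum_iteratedDeriv 3).comp_tendsto hI
  -- `ψ'(θ)` is real, so the linear term `iε ψ'(θ)` has no real part.
  have hre : ∀ ε : ℝ, (psiC (θ + ε * Complex.I)).re - (psiR θ + -psiR'' θ / 2 * ε ^ 2)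
      = (psiC (θ + ε * Complex.I) - ∑ i ∈ Finset.range 3,
          iteratedDeriv i psiC θ / i.factorial * (ε * Complex.I) ^ i).re := by
    intro ε
    simp [Finset.sum_range_succ, iteratedDeriv_psiC_ofReal _ hθ, psiR'', pow_two, Complex.mul_re,
      neg_div]
  have hcube : (fun ε : ℝ => ((ε : ℂ) * Complex.I) ^ 3) =O[𝓝 0] fun ε : ℝ => ε ^ 3 :=
    isBigO_of_le _ fun _ => by simp
  refine ((isBigO_of_le _ fun ε => ?_).trans (hT.trans hcube)).trans_isLittleO
    (isLittleO_pow_pow (by norm_num))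
  rw [hre, Real.norm_eq_abs]
  exact Complex.abs_re_le_norm _

theorem integral_re_psiC_div_sqrt_one_sub_sq {θ : ℝ} (hθ : 0 < θ) (s b : ℝ) :
    ∫ u in (0:ℝ)..1, (θ * (psiC (θ + Complex.I * u * θ * b / 2)).re + s) / √(1 - u ^ 2)
      = θ * (∫ t in (0:ℝ)..π / 2, (psiC (θ + (sin t * (θ * b / 2) : ℝ) * Complex.I)).re)
        + π / 2 * s := by
  have harg : ∀ t : ℝ, (θ : ℂ) + Complex.I * (sin t : ℝ) * θ * b / 2
      = θ + ((sin t * (θ * b / 2) : ℝ) : ℂ) * Complex.I := fun t => by push_cast; ring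
  have hint : IntervalIntegrable
      (fun t => θ * (psiC (θ + (sin t * (θ * b / 2) : ℝ) * Complex.I)).re) volume 0 (π / 2) :=
    (((continuous_re_psiC_add_mul_I hθ).comp (by fun_prop)).const_mul θ).intervalIntegrable _ _
  rw [integral_div_sqrt_one_sub_sq (by norm_num) (by norm_num), arcsin_zero, arcsin_one]
  simp only [harg]
  rw [intervalIntegral.integral_add hint intervalIntegrable_const,
    intervalIntegral.integral_const_mul, intervalIntegral.integral_const, smul_eq_mul, sub_zero]

theorem tendsto_div_sq_of_isLittleO {F : ℝ → ℝ} {L : ℝ}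
    (hF : (fun x => F x - L * x ^ 2) =o[𝓝 0] fun x => x ^ 2) :
    Tendsto (fun x => F x / x ^ 2) (𝓝[≠] 0) (𝓝 L) := by
  have h := (hF.tendsto_div_nhds_zero.mono_left (nhdsWithin_le_nhds (s := {0}ᶜ))).const_add L
  rw [add_zero] at h
  refine h.congr' (eventually_nhdsWithin_of_forall fun x (hx : x ≠ 0) => ?_)
  field_simp
  ring

/-- For `θ > 0`, `s ∈ ℝ` and
`H(b) = ∫₀¹ (θ·Re ψ(θ + i u θ b/2) + s)/√(1−u²) du`, one has
`(H(b) − (π/2)(s + θψ(θ)))/b² → −(π/32)θ³ψ″(θ)` as `b → 0⁺`. -/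
theorem statement17 (θ : ℝ) (hθ : 0 < θ) (s : ℝ) (H : ℝ → ℝ)
    (hH : ∀ b : ℝ, H b =
      ∫ u in (0:ℝ)..1,
        (θ * (psiC ((θ : ℂ) + Complex.I * (u : ℂ) * (θ : ℂ) * (b : ℂ) / 2)).re + s)
          / Real.sqrt (1 - u ^ 2)) :
    Filter.Tendsto
      (fun b : ℝ => (H b - Real.pi / 2 * (s + θ * psiR θ)) / b ^ 2)
      (nhdsWithin 0 (Set.Ioi (0 : ℝ)))
      (nhds (-(Real.pi / 32) * θ ^ 3 * psiR'' θ)) := by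
  have hsin_sq : ∫ t in (0:ℝ)..π / 2, sin t ^ 2 = π / 4 := by
    rw [integral_sin_sq, cos_pi_div_two, sin_zero]; ring
  have hφ := isLittleO_intervalIntegral_comp_mul_sub_quadratic (α := 0) (β := π / 2)
    (continuous_re_psiC_add_mul_I hθ) continuous_sin.continuousOn (isLittleO_re_psiC_add_mul_I hθ)
  have hscale : Tendsto (fun b : ℝ => θ * b / 2) (𝓝 0) (𝓝 0) :=
    (by fun_prop : Continuous fun b : ℝ => θ * b / 2).tendsto' 0 0 (by simp)
  have hscale_sq : (fun b : ℝ => (θ * b / 2) ^ 2) =O[𝓝 0] fun b => b ^ 2 :=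
    (isBigO_const_mul_self ((θ / 2) ^ 2) (fun b : ℝ => b ^ 2) _).congr_left fun b => by ring
  have hexpand : (fun b => H b - π / 2 * (s + θ * psiR θ) - -(π / 32) * θ ^ 3 * psiR'' θ * b ^ 2)
      =o[𝓝 0] fun b => b ^ 2 := by
    refine ((hφ.comp_tendsto hscale).const_mul_left θ).trans_isBigO hscale_sq |>.congr_left
      fun b => ?_
    simp only [Function.comp_apply, hH, integral_re_psiC_div_sqrt_one_sub_sq hθ, hsin_sq]
    ring
  exact (tendsto_div_sq_of_isLittleO hexpand).mono_left
    (nhdsWithin_mono _ fun _ hb => ne_of_gt hb)
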